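/- (Forward-backward method, cocoercive case.) Let A be a maximally α_A-monotone set-valued operator on H, let B : H → H be β-cocoercive (β > 0), let θ, σ_A, σ_B > 0 satisfy θα_A + σ_A > 0, let γ ∈ (0, 2β/(θ + βσ_B)), and let q ∈ H. Let (x_k) be a sequence in H such that for all k: (1/(1+γσ_A))·((1 − γσ_B)x_k − γθ·B(x_k) + γ(σ_A+σ_B)q) − x_{k+1} ∈ (γθ/(1+γσ_A))•A(x_{k+1}). Then there is a unique x⋆ ∈ H with q − x⋆ ∈ (θ/(σ_A+σ_B))•(A+B)(x⋆), and (x_k) converges R-linearly to x⋆. -/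

import Mathlib

/-!
Write the iteration as `x (k+1) + γ (θ u k + σA (x (k+1) - q)) = x k - γ (θ B (x k) + σB (x k - q))`
with `u k ∈ A (x (k+1))`. The backward part `θ A + σA (· - q)` is `(θ αA + σA)`-monotone and the
forward part `θ B + σB (· - q)` is `β / (θ + β σB)`-cocoercive, so for `γ < 2β / (θ + β σB)` each
step contracts distances by the factor `(1 + 2γ (θ αA + σA))^(-1/2) < 1`. Consecutive differences
decay geometrically, hence the iterates converge R-linearly; the graph of a maximally monotone
operator is closed, so the limit solves the inclusion, and the solution is unique because
`A + B + ((σA + σB) / θ) id` is strongly monotone.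
-/

open scoped RealInnerProductSpace Pointwise

/-- `A` is `α`-monotone. -/
def IsMonotoneOp {H : Type*} [NormedAddCommGroup H] [InnerProductSpace ℝ H]
    (α : ℝ) (A : H → Set H) : Prop :=
  ∀ x y u v : H, u ∈ A x → v ∈ A y → α * ‖x - y‖ ^ 2 ≤ ⟪x - y, u - v⟫

/-- `A` is maximally `α`-monotone. -/
def IsMaxMonotoneOp {H : Type*} [NormedAddCommGroup H] [InnerProductSpace ℝ H]
    (α : ℝ) (A : H → Set H) : Prop :=
  IsMonotoneOp α A ∧
    ∀ x u : H, (∀ y v : H, v ∈ A y → α * ‖x - y‖ ^ 2 ≤ ⟪x - y, u - v⟫) → u ∈ A x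

open Filter Topology

theorem exists_tendsto_dist_le_geometric_of_dist_succ_le {X : Type*} [PseudoMetricSpace X]
    [CompleteSpace X] {f : ℕ → X} {c : ℝ} (hc₀ : 0 ≤ c) (hc₁ : c < 1)
    (hf : ∀ n, dist (f (n + 1)) (f (n + 2)) ≤ c * dist (f n) (f (n + 1))) :
    ∃ a, Tendsto f atTop (𝓝 a) ∧ ∀ n, dist (f n) a ≤ dist (f 0) (f 1) / (1 - c) * c ^ n := by
  have hgeom : ∀ n, dist (f n) (f (n + 1)) ≤ dist (f 0) (f 1) * c ^ n := fun n => by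
    rw [mul_comm]
    exact le_geom (u := fun n => dist (f n) (f (n + 1))) hc₀ n fun k _ => hf k
  obtain ⟨a, ha⟩ := cauchySeq_tendsto_of_complete (cauchySeq_of_le_geometric c _ hc₁ hgeom)
  exact ⟨a, ha, fun n => (dist_le_of_le_geometric_of_tendsto c _ hc₁ hgeom ha n).trans_eq
    (by ring)⟩

section ForwardBackward

variable {H : Type*} [NormedAddCommGroup H] [InnerProductSpace ℝ H]

theorem mul_norm_le_norm_of_mul_norm_sq_le_inner {β : ℝ} {d e : H}
    (h : β * ‖e‖ ^ 2 ≤ ⟪d, e⟫) : β * ‖e‖ ≤ ‖d‖ := by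
  rcases (norm_nonneg e).eq_or_lt with he | he
  · simp [← he]
  · nlinarith [real_inner_le_norm d e]

theorem mul_inner_le_norm_sq_of_mul_norm_sq_le_inner {β : ℝ} {d e : H} (hβ : 0 ≤ β)
    (h : β * ‖e‖ ^ 2 ≤ ⟪d, e⟫) : β * ⟪d, e⟫ ≤ ‖d‖ ^ 2 := by
  nlinarith [real_inner_le_norm d e, mul_norm_le_norm_of_mul_norm_sq_le_inner h, norm_nonneg d]

theorem mul_norm_sq_le_inner_smul_add_smul_of_mul_norm_sq_le_inner {β θ σ : ℝ} {d e : H}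
    (hβ : 0 < β) (hθ : 0 < θ) (hσ : 0 ≤ σ) (h : β * ‖e‖ ^ 2 ≤ ⟪d, e⟫) :
    β / (θ + β * σ) * ‖θ • e + σ • d‖ ^ 2 ≤ ⟪d, θ • e + σ • d⟫ := by
  have hde := mul_inner_le_norm_sq_of_mul_norm_sq_le_inner hβ.le h
  rw [norm_add_sq_real, inner_add_right, norm_smul, norm_smul, real_inner_smul_left,
    real_inner_smul_right, real_inner_smul_right, real_inner_smul_right, real_inner_comm d e,
    real_inner_self_eq_norm_sq, Real.norm_of_nonneg hθ.le, Real.norm_of_nonneg hσ,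
    div_mul_eq_mul_div, div_le_iff₀ (by positivity)]
  nlinarith [mul_le_mul_of_nonneg_left h (sq_nonneg θ),
    mul_le_mul_of_nonneg_left hde (mul_nonneg hθ.le hσ)]

theorem mul_norm_sq_le_inner_smul_add_smul {α θ σ : ℝ} {d w : H} (hθ : 0 ≤ θ)
    (h : α * ‖d‖ ^ 2 ≤ ⟪d, w⟫) : (θ * α + σ) * ‖d‖ ^ 2 ≤ ⟪d, θ • w + σ • d⟫ := by
  rw [inner_add_right, real_inner_smul_right, real_inner_smul_right, real_inner_self_eq_norm_sq]
  nlinarith [mul_le_mul_of_nonneg_left h hθ]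

theorem norm_sub_smul_sq_le_of_mul_norm_sq_le_inner {β γ : ℝ} {d e : H} (hγ : 0 ≤ γ)
    (hγβ : γ ≤ 2 * β) (h : β * ‖e‖ ^ 2 ≤ ⟪d, e⟫) : ‖d - γ • e‖ ^ 2 ≤ ‖d‖ ^ 2 := by
  rw [norm_sub_sq_real, real_inner_smul_right, norm_smul, Real.norm_of_nonneg hγ]
  nlinarith [mul_le_mul_of_nonneg_left hγβ (mul_nonneg hγ (sq_nonneg ‖e‖))]

theorem mul_norm_sq_le_norm_add_smul_sq {μ γ : ℝ} {d w : H} (hγ : 0 ≤ γ)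
    (h : μ * ‖d‖ ^ 2 ≤ ⟪d, w⟫) : (1 + 2 * γ * μ) * ‖d‖ ^ 2 ≤ ‖d + γ • w‖ ^ 2 := by
  rw [norm_add_sq_real, real_inner_smul_right, norm_smul, Real.norm_of_nonneg hγ]
  nlinarith [mul_le_mul_of_nonneg_left h hγ, sq_nonneg (γ * ‖w‖)]

theorem mul_norm_sq_le_of_forwardBackward {μ β γ : ℝ} {x y x' y' u v e f : H} (hγ : 0 ≤ γ)
    (hγβ : γ ≤ 2 * β) (hx : x' + γ • u = x - γ • e) (hy : y' + γ • v = y - γ • f)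
    (huv : μ * ‖x' - y'‖ ^ 2 ≤ ⟪x' - y', u - v⟫) (hef : β * ‖e - f‖ ^ 2 ≤ ⟪x - y, e - f⟫) :
    (1 + 2 * γ * μ) * ‖x' - y'‖ ^ 2 ≤ ‖x - y‖ ^ 2 := by
  have hstep : (x' - y') + γ • (u - v) = (x - y) - γ • (e - f) := by
    linear_combination (norm := module) hx - hy
  calc (1 + 2 * γ * μ) * ‖x' - y'‖ ^ 2 ≤ ‖(x' - y') + γ • (u - v)‖ ^ 2 :=
        mul_norm_sq_le_norm_add_smul_sq hγ huv
    _ = ‖(x - y) - γ • (e - f)‖ ^ 2 := by rw [hstep]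
    _ ≤ ‖x - y‖ ^ 2 := norm_sub_smul_sq_le_of_mul_norm_sq_le_inner hγ hγβ hef

theorem lipschitzWith_of_cocoercive {β : ℝ} {B : H → H} (hβ : 0 < β)
    (hB : ∀ x y : H, β * ‖B x - B y‖ ^ 2 ≤ ⟪x - y, B x - B y⟫) :
    LipschitzWith (Real.toNNReal β⁻¹) B :=
  LipschitzWith.of_dist_le' fun x y => by
    rw [dist_eq_norm, dist_eq_norm, inv_mul_eq_div, le_div_iff₀ hβ, mul_comm]
    exact mul_norm_le_norm_of_mul_norm_sq_le_inner (hB x y)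

variable {A : H → Set H}

theorem IsMaxMonotoneOp.mem_of_tendsto {α : ℝ} (hA : IsMaxMonotoneOp α A) {ι : Type*}
    {l : Filter ι} [l.NeBot] {x u : ι → H} {x₀ u₀ : H} (hx : Tendsto x l (𝓝 x₀))
    (hu : Tendsto u l (𝓝 u₀)) (hxu : ∀ i, u i ∈ A (x i)) : u₀ ∈ A x₀ :=
  hA.2 x₀ u₀ fun y v hv =>
    le_of_tendsto_of_tendsto' (((hx.sub_const y).norm.pow 2).const_mul α)
      ((hx.sub_const y).inner (hu.sub_const v)) fun i => hA.1 _ _ _ _ (hxu i) hv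

theorem IsMonotoneOp.eq_of_smul_sub_sub_mem {α ρ : ℝ} (hA : IsMonotoneOp α A) {B : H → H}
    (hB : ∀ x y : H, 0 ≤ ⟪x - y, B x - B y⟫) (hαρ : 0 < α + ρ) {p x y : H}
    (hx : ρ • (p - x) - B x ∈ A x) (hy : ρ • (p - y) - B y ∈ A y) : x = y := by
  have hmono := hA _ _ _ _ hx hy
  have hsplit : ρ • (p - x) - B x - (ρ • (p - y) - B y) = -(ρ • (x - y)) - (B x - B y) := by
    module
  rw [hsplit, inner_sub_right, inner_neg_right, real_inner_smul_right,
    real_inner_self_eq_norm_sq] at hmono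
  have hsq : ‖x - y‖ ^ 2 = 0 := by nlinarith [hB x y, sq_nonneg ‖x - y‖]
  simpa [sub_eq_zero] using hsq

theorem mem_smul_setOf_add_iff {B : H → H} {t : ℝ} (ht : t ≠ 0) (z v : H) :
    v ∈ t • {w : H | ∃ u ∈ A z, w = u + B z} ↔ t⁻¹ • v - B z ∈ A z := by
  rw [Set.mem_smul_set_iff_inv_smul_mem₀ ht]
  simp only [Set.mem_ofPred_eq, ← sub_eq_iff_eq_add, exists_eq_right']

/-- The element `u ∈ A b` through which the step from `a` to `b` is realised:
`b + γ (θ u + σA (b - q)) = a - γ (θ B a + σB (a - q))`. -/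
noncomputable def fbSelection (B : H → H) (θ σA σB γ : ℝ) (q a b : H) : H :=
  (γ * θ)⁻¹ • (a - b) - B a - (σB / θ) • (a - q) - (σA / θ) • (b - q)

variable {B : H → H} {αA β θ σA σB γ : ℝ} {q : H}

theorem mem_smul_iff_fbSelection_mem (hγ : γ ≠ 0) (hθ : θ ≠ 0) (hσA : 1 + γ * σA ≠ 0)
    (a b : H) :
    (1 / (1 + γ * σA)) • ((1 - γ * σB) • a - (γ * θ) • B a + (γ * (σA + σB)) • q) - b ∈
        (γ * θ / (1 + γ * σA)) • A b ↔ fbSelection B θ σA σB γ q a b ∈ A b := by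
  have hσA' : 1 + σA * γ ≠ 0 := by rwa [mul_comm]
  rw [Set.mem_smul_set_iff_inv_smul_mem₀ (by positivity)]
  convert Iff.rfl using 2
  unfold fbSelection
  match_scalars <;> field_simp <;> ring

theorem fbSelection_step_eq (hγ : γ ≠ 0) (hθ : θ ≠ 0) (a b : H) :
    b + γ • (θ • fbSelection B θ σA σB γ q a b + σA • (b - q)) =
      a - γ • (θ • B a + σB • (a - q)) := by
  unfold fbSelection
  match_scalars <;> field_simp <;> ring

theorem fbSelection_self (a : H) :
    fbSelection B θ σA σB γ q a a = ((σA + σB) / θ) • (q - a) - B a := by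
  unfold fbSelection
  module

theorem continuous_fbSelection (hB : Continuous B) :
    Continuous fun p : H × H => fbSelection B θ σA σB γ q p.1 p.2 := by
  unfold fbSelection
  fun_prop

theorem dist_le_of_fbSelection_mem (hA : IsMonotoneOp αA A) (hβ : 0 < β)
    (hB : ∀ x y : H, β * ‖B x - B y‖ ^ 2 ≤ ⟪x - y, B x - B y⟫) (hθ : 0 < θ) (hσB : 0 ≤ σB)
    (hμ : 0 ≤ θ * αA + σA) (hγ : 0 < γ) (hγ' : γ < 2 * β / (θ + β * σB)) {a a' b b' : H}
    (ha : fbSelection B θ σA σB γ q a a' ∈ A a') (hb : fbSelection B θ σA σB γ q b b' ∈ A b') :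
    dist a' b' ≤ (√(1 + 2 * γ * (θ * αA + σA)))⁻¹ * dist a b := by
  have hγβ : γ ≤ 2 * (β / (θ + β * σB)) := by rw [← mul_div_assoc]; exact hγ'.le
  have hmono := mul_norm_sq_le_inner_smul_add_smul (σ := σA) hθ.le (hA _ _ _ _ ha hb)
  have hcoc := mul_norm_sq_le_inner_smul_add_smul_of_mul_norm_sq_le_inner hβ hθ hσB (hB a b)
  set u := fbSelection B θ σA σB γ q a a'
  set v := fbSelection B θ σA σB γ q b b'
  have hAdiff : (θ • u + σA • (a' - q)) - (θ • v + σA • (b' - q)) =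
      θ • (u - v) + σA • (a' - b') := by module
  have hBdiff : (θ • B a + σB • (a - q)) - (θ • B b + σB • (b - q)) =
      θ • (B a - B b) + σB • (a - b) := by module
  have hstep (c c' : H) :=
    fbSelection_step_eq (B := B) (σA := σA) (σB := σB) (q := q) hγ.ne' hθ.ne' c c'
  have key := mul_norm_sq_le_of_forwardBackward hγ.le hγβ (hstep a a') (hstep b b')
    (by rw [hAdiff]; exact hmono) (by rw [hBdiff]; exact hcoc)
  rw [dist_eq_norm, dist_eq_norm, ← div_eq_inv_mul, le_div_iff₀ (by positivity),
    ← pow_le_pow_iff_left₀ (by positivity) (norm_nonneg _) two_ne_zero, mul_pow,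
    Real.sq_sqrt (by positivity)]
  linarith

end ForwardBackward

/-- Forward-backward method (cocoercive case): the iterates converge R-linearly to the unique
point `x⋆` with `q − x⋆ ∈ (θ/(σ_A+σ_B))•(A+B)(x⋆)`. -/
theorem forward_backward_cocoercive {H : Type*} [NormedAddCommGroup H] [InnerProductSpace ℝ H]
    [CompleteSpace H]
    (A : H → Set H) (B : H → H) (αA β θ σA σB γ : ℝ) (q : H)
    (hA : IsMaxMonotoneOp αA A)
    (hβ : 0 < β) (hB : ∀ x y : H, β * ‖B x - B y‖ ^ 2 ≤ ⟪x - y, B x - B y⟫)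
    (hθ : 0 < θ) (hσA : 0 < σA) (hσB : 0 < σB)
    (hA' : 0 < θ * αA + σA)
    (hγ : 0 < γ) (hγ' : γ < 2 * β / (θ + β * σB))
    (x : ℕ → H)
    (hx : ∀ k : ℕ,
      (1 / (1 + γ * σA)) •
          ((1 - γ * σB) • x k - (γ * θ) • B (x k) + (γ * (σA + σB)) • q) - x (k + 1) ∈
        (γ * θ / (1 + γ * σA)) • A (x (k + 1))) :
    ∃ xs : H,
      (q - xs ∈ (θ / (σA + σB)) • {w : H | ∃ u ∈ A xs, w = u + B xs}) ∧
        (∀ z : H, q - z ∈ (θ / (σA + σB)) • {w : H | ∃ u ∈ A z, w = u + B z} → z = xs) ∧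
          ∃ M c : ℝ, 0 ≤ M ∧ 0 ≤ c ∧ c < 1 ∧ ∀ k : ℕ, ‖x k - xs‖ ≤ M * c ^ k := by
  have hu : ∀ k, fbSelection B θ σA σB γ q (x k) (x (k + 1)) ∈ A (x (k + 1)) := fun k =>
    (mem_smul_iff_fbSelection_mem hγ.ne' hθ.ne' (by positivity) _ _).1 (hx k)
  set c := (√(1 + 2 * γ * (θ * αA + σA)))⁻¹
  have hc₀ : 0 ≤ c := by positivity
  have hc₁ : c < 1 := inv_lt_one_of_one_lt₀ ((Real.lt_sqrt zero_le_one).2 (by nlinarith))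
  obtain ⟨xs, hlim, hrate⟩ := exists_tendsto_dist_le_geometric_of_dist_succ_le hc₀ hc₁ fun k =>
    dist_le_of_fbSelection_mem hA.1 hβ hB hθ hσB.le hA'.le hγ hγ' (hu k) (hu (k + 1))
  have hlim' := hlim.comp (tendsto_add_atTop_nat 1)
  have hsol : ((σA + σB) / θ) • (q - xs) - B xs ∈ A xs := by
    rw [← fbSelection_self (γ := γ)]
    exact hA.mem_of_tendsto hlim' (((continuous_fbSelection
      (lipschitzWith_of_cocoercive hβ hB).continuous).tendsto _).comp (hlim.prodMk_nhds hlim')) hu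
  have hsol_iff (z : H) : q - z ∈ (θ / (σA + σB)) • {w : H | ∃ u ∈ A z, w = u + B z} ↔
      ((σA + σB) / θ) • (q - z) - B z ∈ A z := by
    rw [mem_smul_setOf_add_iff (by positivity), inv_div]
  have hBmono (y z : H) : 0 ≤ ⟪y - z, B y - B z⟫ := (mul_nonneg hβ.le (sq_nonneg _)).trans (hB y z)
  have hρ : 0 < αA + (σA + σB) / θ := by
    rw [← mul_pos_iff_of_pos_left hθ, mul_add, mul_div_cancel₀ _ hθ.ne']; linarith
  refine ⟨xs, (hsol_iff xs).2 hsol, fun z hz => hA.1.eq_of_smul_sub_sub_mem hBmono hρ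
    ((hsol_iff z).1 hz) hsol, dist (x 0) (x 1) / (1 - c), c, by positivity, hc₀, hc₁, fun k => ?_⟩
  simpa only [dist_eq_norm] using hrate k
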